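/- Markov chain of marginals: let (t_i)_{i=0}^{N} be times with σ_{t_0} = 0, and define a process by X_{t_N} ~ p(x_{t_N} | y), and recursively for i = N, ..., 1: sample X0^{(i)} ~ p(x0 | X_{t_i}, y) and set X_{t_{i−1}} = X0^{(i)} + σ_{t_{i−1}} ε_i with ε_i ~ N(0,I) independent. If for each i, X_{t_{i−1}} is conditionally independent of (X_{t_i}, Y) given X0 with conditional law N(X0, σ_{t_{i−1}}² I) under the true joint model, then by induction every X_{t_i} produced by this procedure has law p(x_{t_i} | y), and in particular X_{t_0} has the posterior law p(x0 | y). -/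

import Mathlib

open MeasureTheory Real

/-- Isotropic Gaussian density `N(u; 0, σ² I)` on `ℝⁿ`. -/
noncomputable def gaussDensity (n : ℕ) (σ : ℝ) (u : EuclideanSpace ℝ (Fin n)) : ℝ :=
  (2 * π * σ ^ 2) ^ (-(n : ℝ) / 2) * Real.exp (-‖u‖ ^ 2 / (2 * σ ^ 2))

lemma gauss_cont (n : ℕ) (σ : ℝ) : Continuous (gaussDensity n σ) := by
  unfold gaussDensity; fun_prop

lemma gauss_nonneg (n : ℕ) (σ : ℝ) (u : EuclideanSpace ℝ (Fin n)) : 0 ≤ gaussDensity n σ u := by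
  unfold gaussDensity; positivity

lemma gauss_le (n : ℕ) (σ : ℝ) (u : EuclideanSpace ℝ (Fin n)) :
    gaussDensity n σ u ≤ (2 * π * σ ^ 2) ^ (-(n : ℝ) / 2) := by
  unfold gaussDensity
  have h1 : Real.exp (-‖u‖ ^ 2 / (2 * σ ^ 2)) ≤ 1 := by
    rw [Real.exp_le_one_iff]
    rcases eq_or_ne σ 0 with h | h
    · simp [h]
    · apply div_nonpos_of_nonpos_of_nonneg
      · simp [sq_nonneg]
      · positivity
  calc _ ≤ (2 * π * σ ^ 2) ^ (-(n : ℝ) / 2) * 1 := by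
        apply mul_le_mul_of_nonneg_left h1 (by positivity)
    _ = _ := mul_one _

lemma integrable_rexp_norm (n : ℕ) {b : ℝ} (hb : 0 < b) :
    Integrable (fun v : EuclideanSpace ℝ (Fin n) => rexp (-b * ‖v‖ ^ 2)) := by
  have h := (GaussianFourier.integrable_cexp_neg_mul_sq_norm_add (V := EuclideanSpace ℝ (Fin n))
    (b := (b : ℂ)) (by simpa using hb) 0 0).norm
  refine h.congr ?_
  filter_upwards with v
  rw [zero_mul, add_zero, Complex.norm_exp]
  norm_num
  left; norm_cast

lemma gauss_integrable (n : ℕ) {σ : ℝ} (hσ : 0 < σ) :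
    Integrable (gaussDensity n σ) := by
  have hb : (0:ℝ) < 1 / (2 * σ ^ 2) := by positivity
  have h := ((integrable_rexp_norm n hb).const_mul ((2 * π * σ ^ 2) ^ (-(n : ℝ) / 2)))
  refine h.congr ?_
  filter_upwards with v
  unfold gaussDensity
  congr 2
  field_simp

lemma gauss_integral_one (n : ℕ) {σ : ℝ} (hσ : 0 < σ) :
    ∫ u : EuclideanSpace ℝ (Fin n), gaussDensity n σ u = 1 := by
  have hb : (0:ℝ) < 1 / (2 * σ ^ 2) := by positivity
  have key := GaussianFourier.integral_rexp_neg_mul_sq_norm (V := EuclideanSpace ℝ (Fin n)) hb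
  have heq : ∀ u : EuclideanSpace ℝ (Fin n),
      gaussDensity n σ u = (2 * π * σ ^ 2) ^ (-(n : ℝ) / 2) * rexp (-(1/(2*σ^2)) * ‖u‖^2) := by
    intro u; unfold gaussDensity; congr 2; field_simp
  simp_rw [heq]
  rw [integral_const_mul, key]
  have h2 : π / (1 / (2 * σ ^ 2)) = 2 * π * σ ^ 2 := by field_simp
  rw [h2, finrank_euclideanSpace_fin]
  rw [← Real.rpow_add (by positivity), neg_div, neg_add_cancel, Real.rpow_zero]

/-- The shear `(x, y) ↦ (x - y, y)` as a measurable equivalence. -/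
def shearEquiv (E : Type*) [AddGroup E] [MeasurableSpace E] [MeasurableSub₂ E]
    [MeasurableAdd₂ E] : (E × E) ≃ᵐ (E × E) where
  toFun p := (p.1 - p.2, p.2)
  invFun p := (p.1 + p.2, p.2)
  left_inv p := by simp
  right_inv p := by simp
  measurable_toFun := (measurable_fst.sub measurable_snd).prodMk measurable_snd
  measurable_invFun := (measurable_fst.add measurable_snd).prodMk measurable_snd

section
variable {n : ℕ}
local notation "E" => EuclideanSpace ℝ (Fin n)

lemma conv_one (h : E → ℝ) (hh : Integrable h) {σ : ℝ} (hσ : 0 < σ) :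
    ∫ xi : E, ∫ x0, h x0 * gaussDensity n σ (xi - x0) = ∫ x0, h x0 := by
  set g : E × E → ℝ := fun p => gaussDensity n σ p.1 * h p.2 with hg
  have hg_int : Integrable g ((volume : Measure E).prod volume) :=
    (gauss_integrable n hσ).mul_prod hh
  have hφ : MeasurePreserving (fun p : E × E => (p.1 - p.2, p.2))
      ((volume : Measure E).prod volume) ((volume : Measure E).prod volume) :=
    measurePreserving_sub_prod volume volume
  have hcomp : Integrable (g ∘ (fun p : E × E => (p.1 - p.2, p.2)))
      ((volume : Measure E).prod volume) :=
    (hφ.integrable_comp hg_int.aestronglyMeasurable).mpr hg_int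
  have hint : Integrable (Function.uncurry fun xi x0 : E => h x0 * gaussDensity n σ (xi - x0))
      ((volume : Measure E).prod volume) := by
    refine hcomp.congr ?_
    filter_upwards with p
    simp [g, Function.uncurry, mul_comm]
  rw [integral_integral hint, ← Measure.volume_eq_prod]
  have h1 : ∫ z : E × E, h z.2 * gaussDensity n σ (z.1 - z.2)
      = ∫ z : E × E, g z := by
    rw [Measure.volume_eq_prod, ← hφ.integral_comp (shearEquiv E).measurableEmbedding g]
    congr 1
    ext p
    simp [g, mul_comm]
  calc ∫ z : E × E, h z.2 * gaussDensity n σ (z.1 - z.2) = ∫ z : E × E, g z := h1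
    _ = (∫ u, gaussDensity n σ u) * ∫ x0, h x0 := integral_prod_mul _ _
    _ = ∫ x0, h x0 := by rw [gauss_integral_one n hσ, one_mul]

lemma gauss_shift_one {σ : ℝ} (hσ : 0 < σ) (x0 : E) :
    ∫ x1 : E, gaussDensity n σ (x1 - x0) = 1 := by
  rw [integral_sub_right_eq_self (gaussDensity n σ) x0]
  exact gauss_integral_one n hσ

lemma mul_gauss_integrable (q : E → ℝ) (hq_int : Integrable q) (σ : ℝ) (x' : E) :
    Integrable (fun x0 : E => q x0 * gaussDensity n σ (x' - x0)) := by
  have h := Integrable.bdd_mul (f := fun x0 : E => gaussDensity n σ (x' - x0)) (c := (2 * π * σ ^ 2) ^ (-(n : ℝ) / 2)) hq_int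
    ((gauss_cont n σ).comp (continuous_const.sub continuous_id)).aestronglyMeasurable
    (Filter.Eventually.of_forall fun x => by
      rw [Real.norm_of_nonneg (gauss_nonneg n σ _)]; exact gauss_le n σ _)
  refine h.congr ?_
  filter_upwards with x0
  ring

end

/-- **Correctness of the full annealing chain.** Fix a measurement `y` and let `q = p(· | y)`
be the posterior density of `X₀` given `Y = y`, with noisy posterior marginals
`P σ x = ∫ q(x₀) N(x; x₀, σ² I) dx₀` for `σ > 0` (the density of `X_t | Y = y` in the true
model, in which `X_t = X₀ + σ_t ε` is conditionally independent of everything else given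
`X₀`). Consider the sampling procedure that starts from `ρ_N = p(x_{t_N} | y)` and,
recursively for `i = N, …, 1`, samples `X₀ ~ p(x₀ | X_{t_i}, y)` (whose density is
`q(x₀) N(x_{t_i}; x₀, σ_{t_i}² I) / P σ_{t_i} (x_{t_i})`) and sets
`X_{t_{i−1}} = X₀ + σ_{t_{i−1}} ε_i` (with `σ_{t_0} = 0`, i.e. `X_{t_0} = X₀`). Then every
`X_{t_i}` produced has the marginal law `p(x_{t_i} | y)`, and in particular `X_{t_0}` has the
posterior law `p(x₀ | y) = q`. -/
theorem daps_chain_correctness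
    (n : ℕ) (N : ℕ) (hN : 1 ≤ N)
    (σs : ℕ → ℝ) (hσ0 : σs 0 = 0) (hσ_pos : ∀ i, 1 ≤ i → i ≤ N → 0 < σs i)
    (q : EuclideanSpace ℝ (Fin n) → ℝ)
    (hq_pos : ∀ x, 0 < q x)
    (hq_int : Integrable q)
    (hq_one : ∫ x, q x = 1)
    -- noisy posterior marginals under the true model
    (P : ℝ → EuclideanSpace ℝ (Fin n) → ℝ)
    (hP : ∀ σ x, P σ x = ∫ x0, q x0 * gaussDensity n σ (x - x0))
    (hP_pos : ∀ i, 1 ≤ i → i ≤ N → ∀ x, 0 < P (σs i) x)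
    -- densities of the iterates of the sampling procedure
    (ρ : ℕ → EuclideanSpace ℝ (Fin n) → ℝ)
    (hρ_init : ∀ x, ρ N x = P (σs N) x)
    (hρ_rec : ∀ i, 2 ≤ i → i ≤ N → ∀ x',
      ρ (i - 1) x' = ∫ xi, ∫ x0,
        ρ i xi * (q x0 * gaussDensity n (σs i) (xi - x0) / P (σs i) xi) *
          gaussDensity n (σs (i - 1)) (x' - x0))
    -- final step: σ_{t_0} = 0, so X_{t_0} = X₀ sampled from p(x₀ | X_{t_1}, y)
    (hρ_final : ∀ x0,
      ρ 0 x0 = ∫ x1, ρ 1 x1 * (q x0 * gaussDensity n (σs 1) (x1 - x0) / P (σs 1) x1)) :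
    (∀ i, 1 ≤ i → i ≤ N → ∀ x, ρ i x = P (σs i) x) ∧ (∀ x0, ρ 0 x0 = q x0) := by
  have key : ∀ j i, 1 ≤ i → i ≤ N → N - i = j → ∀ x, ρ i x = P (σs i) x := by
    intro j
    induction j with
    | zero =>
      intro i h1 h2 h3 x
      have : i = N := by omega
      subst this
      exact hρ_init x
    | succ j ih =>
      intro i h1 h2 h3 x'
      have hi1 : i + 1 ≤ N := by omega
      have ihP : ∀ x, ρ (i + 1) x = P (σs (i + 1)) x := ih (i + 1) (by omega) hi1 (by omega)
      have hrec := hρ_rec (i + 1) (by omega) hi1 x'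
      simp only [Nat.add_sub_cancel] at hrec
      rw [hrec]
      have hσi1 : 0 < σs (i + 1) := hσ_pos (i + 1) (by omega) hi1
      have hσi : 0 < σs i := hσ_pos i h1 h2
      have hPpos := hP_pos (i + 1) (by omega) hi1
      have hinteq : ∀ xi x0 : EuclideanSpace ℝ (Fin n),
          ρ (i + 1) xi * (q x0 * gaussDensity n (σs (i + 1)) (xi - x0) / P (σs (i + 1)) xi) *
            gaussDensity n (σs i) (x' - x0)
          = (q x0 * gaussDensity n (σs i) (x' - x0)) * gaussDensity n (σs (i + 1)) (xi - x0) := by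
        intro xi x0
        rw [ihP xi]
        field_simp [(hPpos xi).ne']
      simp_rw [hinteq]
      rw [conv_one (fun x0 => q x0 * gaussDensity n (σs i) (x' - x0))
        (mul_gauss_integrable q hq_int (σs i) x') hσi1]
      exact (hP (σs i) x').symm
  have key' : ∀ i, 1 ≤ i → i ≤ N → ∀ x, ρ i x = P (σs i) x :=
    fun i h1 h2 => key (N - i) i h1 h2 rfl
  refine ⟨key', ?_⟩
  intro x0
  rw [hρ_final x0]
  have hσ1 : 0 < σs 1 := hσ_pos 1 le_rfl hN
  have hPpos := hP_pos 1 le_rfl hN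
  have heq : ∀ x1 : EuclideanSpace ℝ (Fin n),
      ρ 1 x1 * (q x0 * gaussDensity n (σs 1) (x1 - x0) / P (σs 1) x1)
        = q x0 * gaussDensity n (σs 1) (x1 - x0) := by
    intro x1
    rw [key' 1 le_rfl hN x1]
    field_simp [(hPpos x1).ne']
  simp_rw [heq]
  rw [integral_const_mul, gauss_shift_one hσ1 x0, mul_one]
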